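/- For every integer n > 3, μ(C_{2^n}) = (n−2)·2^n + 1; that is, the maximum number of edges that can be added to the cycle C_{2^n} without changing its rank number is (n−2)·2^n + 1. -/

import Mathlib

open SimpleGraph

/-- `f` is a `k`-ranking of `G`: labels lie in `{1,…,k}` and whenever two distinct
vertices get the same label, every path connecting them contains a vertex of
strictly larger label. -/
def IsRanking {V : Type*} (G : SimpleGraph V) (k : ℕ) (f : V → ℕ) : Prop :=
  (∀ v, 1 ≤ f v ∧ f v ≤ k) ∧
  ∀ u v, u ≠ v → f u = f v → ∀ p : G.Walk u v, p.IsPath → ∃ w ∈ p.support, f u < f w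

/-- The rank number `χᵣ(G)`: the least `k` such that `G` admits a `k`-ranking. -/
noncomputable def rankNumber {V : Type*} (G : SimpleGraph V) : ℕ :=
  sInf {k | ∃ f : V → ℕ, IsRanking G k f}

/-- The cycle `C_n` on vertices `v_1, …, v_n` (vertex `vᵢ` is the natural number `i`),
with edges `vᵢ v_{i+1}` for `1 ≤ i ≤ n - 1` together with the edge `v_n v_1`. -/
def cycleG (n : ℕ) : SimpleGraph ℕ :=
  SimpleGraph.fromRel (fun a b => (1 ≤ a ∧ b = a + 1 ∧ b ≤ n) ∨ (a = n ∧ b = 1))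

/-- `μ(G)` for a graph with carrier `ℕ` whose actual vertex set is `Vs`: the maximum
cardinality of a set `S` of edges on `Vs` (non-loops, disjoint from `E(G)`) such that
`χᵣ(G ∪ S) = χᵣ(G)`. -/
noncomputable def muOn (G : SimpleGraph ℕ) (Vs : Set ℕ) : ℕ :=
  sSup {N | ∃ S : Finset (Sym2 ℕ), S.card = N ∧
    (∀ e ∈ S, ¬e.IsDiag ∧ (∀ x ∈ e, x ∈ Vs) ∧ e ∉ G.edgeSet) ∧
    rankNumber (G ⊔ SimpleGraph.fromEdgeSet (S : Set (Sym2 ℕ))) = rankNumber G}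

/-!
Let `f` rank `C ∪ S` with `n + 1` labels. Charge each edge to its endpoint `a` of smaller label
together with the label of its other endpoint: since `a` has at most one neighbour of each label
above its own, there are at most `∑ₐ (n + 1 - f a)` edges. A path on `2 ^ j` vertices needs more
than `j` labels, so each of the `2 ^ (n - j)` consecutive arcs of length `2 ^ j` of the cycle
contains a label above `j`; summing over `j` gives `∑ₐ f a ≥ 2 ^ (n + 1) - 1`, hence
`|S| + 2 ^ n ≤ (n - 1) 2 ^ n + 1`.

Equality is attained by the ruler labelling `a ↦ ν₂(a) + 1`: join `a`, for each `j ≤ n` with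
`2 ^ j ∤ a`, to the odd multiple of `2 ^ j` in the aligned block of length `2 ^ (j + 1)` around
`a`. No multiple of `2 ^ j` lies strictly between these two vertices, which is what keeps the
ruler labelling a ranking of this supergraph of the cycle.
-/

open Finset

theorem Nat.eq_of_dvd_of_lt_add_of_lt_add {P x y : ℕ} (hx : P ∣ x) (hy : P ∣ y)
    (hxy : x < y + P) (hyx : y < x + P) : x = y := by
  by_contra hne
  rcases Nat.lt_or_gt_of_ne hne with h | h
  · have := Nat.le_of_dvd (by omega) (Nat.dvd_sub hy hx); omega
  · have := Nat.le_of_dvd (by omega) (Nat.dvd_sub hx hy); omega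

theorem Finset.le_card_filter_Ico_of_forall_exists {P : ℕ → Prop} [DecidablePred P] {a w : ℕ} :
    ∀ {m : ℕ}, (∀ i < m, ∃ x ∈ Ico (a + i * w) (a + (i + 1) * w), P x) →
      m ≤ #{x ∈ Ico a (a + m * w) | P x}
  | 0, _ => Nat.zero_le _
  | m + 1, h => by
    obtain ⟨x, hx, hPx⟩ := h m (by omega)
    have ih := le_card_filter_Ico_of_forall_exists (m := m) fun i hi => h i (by omega)
    have hsub : Ico a (a + m * w) ⊆ Ico a (a + (m + 1) * w) :=
      Ico_subset_Ico_right (by nlinarith)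
    have hlt : #{x ∈ Ico a (a + m * w) | P x} < #{x ∈ Ico a (a + (m + 1) * w) | P x} := by
      refine card_lt_card ((ssubset_iff_of_subset (filter_subset_filter _ hsub)).2 ⟨x, ?_, ?_⟩)
      · simp only [mem_filter, mem_Ico] at hx ⊢
        exact ⟨⟨by nlinarith, hx.2⟩, hPx⟩
      · simp only [mem_filter, mem_Ico] at hx ⊢
        omega
    omega

theorem Finset.card_filter_product {α β : Type*} (s : Finset α) (t : Finset β) (P : α × β → Prop)
    [DecidablePred P] : #{p ∈ s ×ˢ t | P p} = ∑ b ∈ t, #{a ∈ s | P (a, b)} := by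
  simp only [card_filter, sum_product_right]

theorem Nat.sum_range_two_pow_sub_add_one (n : ℕ) :
    ∑ j ∈ range (n + 1), 2 ^ (n - j) + 1 = 2 ^ (n + 1) := by
  have h := sum_range_reflect (fun j => 2 ^ j) (n + 1)
  simp only [Nat.add_sub_cancel] at h
  rw [h, Nat.geomSum_eq le_rfl]
  have := Nat.one_le_two_pow (n := n + 1)
  omega

theorem Nat.two_pow_succ_dvd_add_two_pow {j b : ℕ} (hb : 2 ^ j ∣ b) (hb' : ¬ 2 ^ (j + 1) ∣ b) :
    2 ^ (j + 1) ∣ b + 2 ^ j := by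
  obtain ⟨c, rfl⟩ := hb
  rcases Nat.even_or_odd c with ⟨d, rfl⟩ | ⟨d, rfl⟩
  · exact absurd ⟨d, by ring⟩ hb'
  · exact ⟨d + 1, by ring⟩

theorem padicValNat_eq_of_dvd_of_not_dvd {p k x : ℕ} [Fact p.Prime] (hx : x ≠ 0) (h : p ^ k ∣ x)
    (h' : ¬ p ^ (k + 1) ∣ x) : padicValNat p x = k := by
  rw [padicValNat_dvd_iff_le hx] at h h'
  omega

theorem padicValNat_le_of_le_two_pow {n x : ℕ} (hx : x ≤ 2 ^ n) : padicValNat 2 x ≤ n :=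
  (padicValNat_le_nat_log x).trans ((Nat.log_mono_right hx).trans (Nat.log_pow one_lt_two n).le)

theorem Nat.add_two_pow_padicValNat_lt {u v : ℕ} (hu : u ≠ 0) (huv : u < v)
    (he : padicValNat 2 u = padicValNat 2 v) : u + 2 ^ padicValNat 2 u < v := by
  have hdvd : 2 ^ padicValNat 2 u ∣ v := he ▸ pow_padicValNat_dvd
  have hz := Nat.two_pow_succ_dvd_add_two_pow (pow_padicValNat_dvd (n := u))
    (pow_succ_padicValNat_not_dvd hu)
  by_contra! hle
  rcases hle.eq_or_lt with heq | hlt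
  · exact pow_succ_padicValNat_not_dvd (p := 2) (n := v) (by omega) (he ▸ heq ▸ hz)
  · have := Nat.eq_of_dvd_of_lt_add_of_lt_add pow_padicValNat_dvd hdvd (by omega) hlt
    omega

namespace IsRanking

variable {V : Type*} {G G' : SimpleGraph V} {k : ℕ} {f : V → ℕ}

theorem mono (h : G' ≤ G) (hf : IsRanking G k f) : IsRanking G' k f :=
  ⟨hf.1, fun u v hne heq p hp => by
    simpa only [Walk.support_mapLe_eq_support] using hf.2 u v hne heq (p.mapLe h) (hp.mapLe h)⟩

theorem ne_of_adj (hf : IsRanking G k f) {u v : V} (h : G.Adj u v) : f u ≠ f v := by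
  intro he
  obtain ⟨w, hw, hlt⟩ := hf.2 u v h.ne he (Walk.cons h Walk.nil) (by simp [h.ne])
  simp only [Walk.support_cons, Walk.support_nil, List.mem_cons, List.not_mem_nil,
    or_false] at hw
  rcases hw with rfl | rfl <;> omega

theorem eq_of_adj_of_adj (hf : IsRanking G k f) {u v w : V} (hv : G.Adj u v) (hw : G.Adj u w)
    (hlt : f u < f v) (he : f v = f w) : v = w := by
  by_contra hne
  obtain ⟨x, hx, hlt'⟩ := hf.2 v w hne he (Walk.cons hv.symm (Walk.cons hw Walk.nil))
    (by simp [hv.ne', hw.ne, hne])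
  simp only [Walk.support_cons, Walk.support_nil, List.mem_cons, List.not_mem_nil,
    or_false] at hx
  rcases hx with rfl | rfl | rfl <;> omega

/-- A pair `(a, j)` stands for an edge from `a` up to a neighbour of label `j + 1`. -/
theorem card_le_card_filter [DecidableEq V] (hf : IsRanking G k f) {A : Finset V}
    {T : Finset (Sym2 V)} (hTG : ∀ e ∈ T, e ∈ G.edgeSet) (hTA : ∀ e ∈ T, ∀ x ∈ e, x ∈ A) :
    #T ≤ #{p ∈ A ×ˢ range k | f p.1 ≤ p.2} := by
  let oriented : Finset (V × V) := {p ∈ A ×ˢ A | s(p.1, p.2) ∈ T ∧ f p.1 < f p.2}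
  calc #T ≤ #oriented := card_le_card_of_surjOn (fun p => s(p.1, p.2)) ?_
    _ ≤ _ := card_le_card_of_injOn (fun p => (p.1, f p.2 - 1)) ?_ ?_
  · intro e he
    induction e with
    | h x y =>
      rw [mem_coe] at he
      have hA : x ∈ A ∧ y ∈ A :=
        ⟨hTA _ he x (Sym2.mem_mk_left x y), hTA _ he y (Sym2.mem_mk_right x y)⟩
      rcases lt_or_gt_of_ne (hf.ne_of_adj (hTG _ he)) with h | h
      · exact ⟨(x, y), by simp [oriented, hA, he, h], rfl⟩
      · exact ⟨(y, x), by simp [oriented, hA, Sym2.eq_swap.symm ▸ he, h], Sym2.eq_swap⟩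
  · intro p hp
    simp only [oriented, coe_filter, mem_product, Set.mem_ofPred_eq] at hp
    have := (hf.1 p.2).2
    simp only [coe_filter, mem_product, mem_range, Set.mem_ofPred_eq]
    exact ⟨⟨hp.1.1, by omega⟩, by omega⟩
  · intro p hp q hq he
    simp only [oriented, coe_filter, mem_product, Set.mem_ofPred_eq] at hp hq
    simp only [Prod.mk.injEq] at he
    have h1 := hTG _ hp.2.1
    have h2 := hTG _ hq.2.1
    rw [← he.1] at h2
    exact Prod.ext he.1 (hf.eq_of_adj_of_adj h1 h2 hp.2.2 (by omega))

end IsRanking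

theorem rankNumber_eq_of_isRanking {V : Type*} {G : SimpleGraph V} {k : ℕ} {f : V → ℕ}
    (hf : IsRanking G k f) (hmin : ∀ k' f', IsRanking G k' f' → k ≤ k') : rankNumber G = k :=
  le_antisymm (Nat.sInf_le ⟨f, hf⟩) (le_csInf ⟨k, f, hf⟩ fun _ ⟨f', hf'⟩ => hmin _ f' hf')

theorem exists_isRanking_rankNumber {V : Type*} {G : SimpleGraph V} (h : rankNumber G ≠ 0) :
    ∃ f, IsRanking G (rankNumber G) f :=
  Nat.sInf_mem (Nat.nonempty_of_pos_sInf (Nat.pos_of_ne_zero h))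

/-- `g` satisfies the ranking condition of the path `a — a+1 — ⋯ — b-1`. -/
def IsPathRanking (g : ℕ → ℕ) (a b : ℕ) : Prop :=
  ∀ p q, a ≤ p → p < q → q < b → g p = g q → ∃ m, p < m ∧ m < q ∧ g p < g m

/-- Splitting at the (unique) vertex of largest label leaves two paths ranked with fewer labels. -/
theorem IsPathRanking.sub_lt_two_pow {g : ℕ → ℕ} :
    ∀ {k a b : ℕ}, IsPathRanking g a b → (∀ i, a ≤ i → i < b → 0 < g i ∧ g i ≤ k) →
      b - a < 2 ^ k
  | 0, a, b, _, hg => by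
    by_contra! h
    have := hg a le_rfl (by omega)
    omega
  | k + 1, a, b, hpath, hg => by
    rcases le_or_gt b a with hba | hab
    · have := Nat.one_le_two_pow (n := k + 1)
      omega
    obtain ⟨m, hm, hmax⟩ := exists_max_image (Ico a b) g ⟨a, mem_Ico.2 ⟨le_rfl, hab⟩⟩
    rw [mem_Ico] at hm
    have hmax' : ∀ i, a ≤ i → i < b → g i ≤ g m := fun i h1 h2 => hmax i (mem_Ico.2 ⟨h1, h2⟩)
    have hlt : ∀ i, a ≤ i → i < b → i ≠ m → g i < g m := by
      intro i h1 h2 hne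
      refine lt_of_le_of_ne (hmax' i h1 h2) fun he => ?_
      rcases lt_or_gt_of_ne hne with h | h
      · obtain ⟨x, _, _, hx⟩ := hpath i m h1 h hm.2 he
        have := hmax' x (by omega) (by omega)
        omega
      · obtain ⟨x, _, _, hx⟩ := hpath m i hm.1 h h2 he.symm
        have := hmax' x (by omega) (by omega)
        omega
    have hleft : m - a < 2 ^ k :=
      sub_lt_two_pow (fun p q hp hpq hq => hpath p q hp hpq (by omega)) fun i h1 h2 => by
        have := hlt i h1 (by omega) (by omega)
        have := hg m hm.1 hm.2
        exact ⟨(hg i h1 (by omega)).1, by omega⟩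
    have hright : b - (m + 1) < 2 ^ k :=
      sub_lt_two_pow (fun p q hp hpq hq => hpath p q (by omega) hpq hq) fun i h1 h2 => by
        have := hlt i (by omega) h2 (by omega)
        have := hg m hm.1 hm.2
        exact ⟨(hg i (by omega) h2).1, by omega⟩
    rw [pow_succ]
    omega

theorem SimpleGraph.exists_walk_support_eq_range' {G : SimpleGraph ℕ} {a b : ℕ} (hab : a ≤ b)
    (hadj : ∀ i, a ≤ i → i < b → G.Adj i (i + 1)) :
    ∃ w : G.Walk a b, w.support = List.range' a (b + 1 - a) := by
  induction b, hab using Nat.le_induction with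
  | base => exact ⟨Walk.nil, by simp⟩
  | succ b hab ih =>
    obtain ⟨w, hw⟩ := ih fun i h1 h2 => hadj i h1 (by omega)
    refine ⟨w.concat (hadj b hab (by omega)), ?_⟩
    rw [Walk.support_concat, hw, show b + 1 + 1 - a = (b + 1 - a) + 1 by omega, List.range'_concat]
    congr 2
    omega

theorem IsRanking.isPathRanking {G : SimpleGraph ℕ} {k : ℕ} {f : ℕ → ℕ} (hf : IsRanking G k f)
    {a b : ℕ} (hadj : ∀ i, a ≤ i → i + 1 < b → G.Adj i (i + 1)) : IsPathRanking f a b := by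
  intro p q hap hpq hqb he
  obtain ⟨w, hw⟩ := exists_walk_support_eq_range' hpq.le fun i h1 h2 => hadj i (by omega) (by omega)
  obtain ⟨m, hm, hlt⟩ := hf.2 p q hpq.ne he w (by rw [Walk.isPath_def, hw]; exact List.nodup_range')
  rw [hw, List.mem_range'_1] at hm
  have hmp : m ≠ p := by rintro rfl; omega
  have hmq : m ≠ q := by rintro rfl; omega
  exact ⟨m, by omega, by omega, hlt⟩

theorem SimpleGraph.Walk.mem_support_or_exists_adj_lt_lt {G : SimpleGraph ℕ} {z : ℕ} :
    ∀ {u v : ℕ} (p : G.Walk u v), u ≤ z → z ≤ v →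
      z ∈ p.support ∨ ∃ x y, G.Adj x y ∧ x ∈ p.support ∧ y ∈ p.support ∧ x < z ∧ z < y
  | _, _, .nil, h1, h2 => Or.inl (by simp only [support_nil, List.mem_singleton]; omega)
  | u, _, .cons (v := w) h q, h1, h2 => by
    rcases h1.eq_or_lt with rfl | hlt
    · exact Or.inl (by simp)
    rcases le_or_gt w z with hw | hw
    · rcases q.mem_support_or_exists_adj_lt_lt hw h2 with hz | ⟨x, y, hxy, hx, hy, hxz, hzy⟩
      · exact Or.inl (by simp [hz])
      · exact Or.inr ⟨x, y, hxy, by simp [hx], by simp [hy], hxz, hzy⟩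
    · exact Or.inr ⟨u, w, h, by simp, by simp, hlt, hw⟩

/-- A path between two equal labels `f u = f v`, `u < v`, must pass over any `z` in between,
either through `z` itself or along an edge jumping over it. -/
theorem isRanking_of_forall_exists_between {G : SimpleGraph ℕ} {k : ℕ} {f : ℕ → ℕ}
    (hf : ∀ v, 1 ≤ f v ∧ f v ≤ k)
    (h : ∀ u v, u < v → f u = f v → (∃ x, G.Adj u x) → (∃ y, G.Adj v y) →
      ∃ z, u < z ∧ z < v ∧ f u < f z ∧ ∀ x y, G.Adj x y → x < z → z < y → f u < f x ∨ f u < f y) :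
    IsRanking G k f := by
  have key : ∀ u v (p : G.Walk u v), u < v → f u = f v → ∃ w ∈ p.support, f u < f w := by
    intro u v p huv he
    obtain ⟨z, h1, h2, hz, hcross⟩ := h u v huv he ⟨_, p.adj_snd (Walk.not_nil_of_ne huv.ne)⟩
      ⟨_, p.reverse.adj_snd (Walk.not_nil_of_ne huv.ne')⟩
    rcases p.mem_support_or_exists_adj_lt_lt h1.le h2.le with hzp | ⟨x, y, hxy, hx, hy, hxz, hzy⟩
    · exact ⟨z, hzp, hz⟩
    · rcases hcross x y hxy hxz hzy with hlt | hlt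
      · exact ⟨x, hx, hlt⟩
      · exact ⟨y, hy, hlt⟩
  refine ⟨hf, fun u v hne he p _ => ?_⟩
  rcases lt_or_gt_of_ne hne with huv | hvu
  · exact key u v p huv he
  · obtain ⟨w, hw, hlt⟩ := key v u p.reverse hvu he.symm
    exact ⟨w, by simpa using hw, he ▸ hlt⟩

theorem cycleG_adj_succ {m i : ℕ} (h1 : 1 ≤ i) (h2 : i < m) : (cycleG m).Adj i (i + 1) := by
  rw [cycleG, fromRel_adj]
  exact ⟨by omega, Or.inl (Or.inl ⟨h1, rfl, h2⟩)⟩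

def cycleEdges (m : ℕ) : Finset (Sym2 ℕ) :=
  insert s(m, 1) ((Ico 1 m).image fun i => s(i, i + 1))

theorem edgeSet_cycleG {m : ℕ} (hm : 2 ≤ m) : (cycleG m).edgeSet = cycleEdges m := by
  ext e
  induction e with
  | h a b =>
    simp only [cycleG, mem_edgeSet, fromRel_adj, cycleEdges, coe_insert, coe_image, coe_Ico,
      Set.mem_insert_iff, Set.mem_image, Set.mem_Ico, Sym2.eq_iff]
    constructor
    · rintro ⟨-, (⟨h1, rfl, h2⟩ | ⟨rfl, rfl⟩) | (⟨h1, rfl, h2⟩ | ⟨rfl, rfl⟩)⟩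
      · exact Or.inr ⟨a, ⟨h1, by omega⟩, Or.inl ⟨rfl, rfl⟩⟩
      · exact Or.inl (Or.inl ⟨rfl, rfl⟩)
      · exact Or.inr ⟨b, ⟨h1, by omega⟩, Or.inr ⟨rfl, rfl⟩⟩
      · exact Or.inl (Or.inr ⟨rfl, rfl⟩)
    · rintro ((⟨rfl, rfl⟩ | ⟨rfl, rfl⟩) | ⟨i, ⟨h1, h2⟩, ⟨rfl, rfl⟩ | ⟨rfl, rfl⟩⟩) <;> omega

theorem card_cycleEdges {m : ℕ} (hm : 3 ≤ m) : #(cycleEdges m) = m := by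
  rw [cycleEdges, card_insert_of_notMem, card_image_of_injOn, Nat.card_Ico]
  · omega
  · intro i _ i' _ h
    simp only [Sym2.eq_iff] at h
    omega
  · simp only [mem_image, mem_Ico, Sym2.eq_iff, not_exists, not_and]
    omega

theorem IsRanking.isPathRanking_cycleG {m k : ℕ} {f : ℕ → ℕ} (hf : IsRanking (cycleG m) k f) :
    IsPathRanking f 1 (m + 1) :=
  hf.isPathRanking fun _ h1 h2 => cycleG_adj_succ h1 (by omega)

theorem IsRanking.lt_of_cycleG {n k : ℕ} {f : ℕ → ℕ} (hf : IsRanking (cycleG (2 ^ n)) k f) :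
    n < k := by
  have := hf.isPathRanking_cycleG.sub_lt_two_pow fun i _ _ => hf.1 i
  exact (Nat.pow_lt_pow_iff_right one_lt_two).1 (by omega)

/-- Each of the `2 ^ (n - j)` consecutive arcs of length `2 ^ j` carries a label above `j`. -/
theorem IsRanking.card_filter_le_cycleG {n k j : ℕ} {f : ℕ → ℕ}
    (hf : IsRanking (cycleG (2 ^ n)) k f) (hj : j ≤ n) :
    #{a ∈ Icc 1 (2 ^ n) | f a ≤ j} + 2 ^ (n - j) ≤ 2 ^ n := by
  have hpow : 2 ^ (n - j) * 2 ^ j = 2 ^ n := by rw [← pow_add, Nat.sub_add_cancel hj]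
  have hwin : ∀ i < 2 ^ (n - j), ∃ x ∈ Ico (1 + i * 2 ^ j) (1 + (i + 1) * 2 ^ j), j < f x := by
    intro i hi
    by_contra! hsmall
    have hle : (i + 1) * 2 ^ j ≤ 2 ^ n := hpow ▸ Nat.mul_le_mul_right _ hi
    have hmul : (i + 1) * 2 ^ j = i * 2 ^ j + 2 ^ j := by ring
    have := IsPathRanking.sub_lt_two_pow (k := j)
      (fun p q hp hpq hq => hf.isPathRanking_cycleG p q (by omega) hpq (by omega))
      fun x h1 h2 => ⟨(hf.1 x).1, hsmall x (mem_Ico.2 ⟨h1, h2⟩)⟩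
    omega
  have hbig := le_card_filter_Ico_of_forall_exists hwin
  rw [hpow, add_comm 1, Ico_add_one_right_eq_Icc] at hbig
  have hsplit := card_filter_add_card_filter_not (s := Icc 1 (2 ^ n)) (fun a => f a ≤ j)
  simp only [not_le, Nat.card_Icc] at hsplit
  omega

/-- The odd multiple of `2 ^ j` in the aligned block of length `2 ^ (j + 1)` containing `a`. -/
def blockMid (j a : ℕ) : ℕ := a / 2 ^ (j + 1) * 2 ^ (j + 1) + 2 ^ j

section BlockMid

variable {j a : ℕ}

theorem two_pow_dvd_blockMid : 2 ^ j ∣ blockMid j a :=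
  dvd_add (dvd_mul_of_dvd_right (pow_dvd_pow 2 j.le_succ) _) dvd_rfl

theorem not_two_pow_succ_dvd_blockMid : ¬ 2 ^ (j + 1) ∣ blockMid j a := by
  intro h
  have := Nat.le_of_dvd (by positivity) ((Nat.dvd_add_right (dvd_mul_left _ _)).1 h)
  rw [pow_succ] at this
  have := Nat.one_le_two_pow (n := j)
  omega

theorem padicValNat_blockMid : padicValNat 2 (blockMid j a) = j :=
  padicValNat_eq_of_dvd_of_not_dvd (by unfold blockMid; positivity) two_pow_dvd_blockMid
    not_two_pow_succ_dvd_blockMid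

theorem blockMid_near (ha : ¬ 2 ^ j ∣ a) : a < blockMid j a + 2 ^ j ∧ blockMid j a < a + 2 ^ j := by
  have hdiv := Nat.div_add_mod' a (2 ^ (j + 1))
  have hlt := Nat.mod_lt a (show 0 < 2 ^ (j + 1) by positivity)
  have hpos : a % 2 ^ (j + 1) ≠ 0 := fun h0 => ha <| by
    rw [← hdiv, h0, add_zero]
    exact dvd_mul_of_dvd_right (pow_dvd_pow 2 j.le_succ) _
  unfold blockMid
  rw [pow_succ] at hdiv hlt hpos ⊢
  omega

theorem not_two_pow_dvd_of_between (ha : ¬ 2 ^ j ∣ a) {t : ℕ}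
    (ht : a < t ∧ t < blockMid j a ∨ blockMid j a < t ∧ t < a) : ¬ 2 ^ j ∣ t := fun h => by
  have := blockMid_near ha
  have := Nat.eq_of_dvd_of_lt_add_of_lt_add h (two_pow_dvd_blockMid (a := a)) (by omega) (by omega)
  omega

theorem blockMid_eq (ha : ¬ 2 ^ j ∣ a) {b : ℕ} (hb : 2 ^ j ∣ b) (hb' : ¬ 2 ^ (j + 1) ∣ b)
    (hab : a < b + 2 ^ j) (hba : b < a + 2 ^ j) : blockMid j a = b := by
  have hmid : 2 ^ (j + 1) ∣ blockMid j a + 2 ^ j := ⟨a / 2 ^ (j + 1) + 1, by unfold blockMid; ring⟩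
  have := blockMid_near ha
  have := Nat.eq_of_dvd_of_lt_add_of_lt_add hmid (Nat.two_pow_succ_dvd_add_two_pow hb hb')
    (by rw [pow_succ]; omega) (by rw [pow_succ]; omega)
  omega

end BlockMid

/-- The pairs `(a, j)` charged by the edges of the extremal graph: one for each label `j + 1` above
the ruler label `ν₂(a) + 1` of `a`. -/
def rulerPairs (n : ℕ) : Finset (ℕ × ℕ) :=
  {p ∈ Icc 1 (2 ^ n) ×ˢ range (n + 1) | ¬ 2 ^ p.2 ∣ p.1}

def rulerEdges (n : ℕ) : Finset (Sym2 ℕ) :=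
  (rulerPairs n).image fun p => s(p.1, blockMid p.2 p.1)

def rulerGraph (n : ℕ) : SimpleGraph ℕ := fromEdgeSet (rulerEdges n)

-- The cap at `n` only changes labels off the vertex set `[1, 2 ^ n]`.
def rulerLabel (n a : ℕ) : ℕ := min (padicValNat 2 a) n + 1

section Ruler

variable {n : ℕ}

theorem card_filter_not_two_pow_dvd {j : ℕ} (hj : j ≤ n) :
    #{a ∈ Icc 1 (2 ^ n) | ¬ 2 ^ j ∣ a} + 2 ^ (n - j) = 2 ^ n := by
  have hdvd : #{a ∈ Icc 1 (2 ^ n) | 2 ^ j ∣ a} = 2 ^ (n - j) := by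
    rw [← zero_add 1, Icc_add_one_left_eq_Ioc, Nat.Ioc_filter_dvd_card_eq_div,
      Nat.pow_div hj two_pos]
  have hsplit := card_filter_add_card_filter_not (s := Icc 1 (2 ^ n)) (fun a => 2 ^ j ∣ a)
  rw [hdvd, Nat.card_Icc, Nat.add_sub_cancel, add_comm] at hsplit
  exact hsplit

theorem card_rulerPairs (hn : 1 ≤ n) : #(rulerPairs n) = (n - 1) * 2 ^ n + 1 := by
  have hlayers : #(rulerPairs n) + ∑ j ∈ range (n + 1), 2 ^ (n - j) = (n + 1) * 2 ^ n := by
    rw [rulerPairs, card_filter_product, ← sum_add_distrib,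
      sum_congr rfl fun j hj => card_filter_not_two_pow_dvd (Nat.lt_succ_iff.1 (mem_range.1 hj)),
      sum_const, card_range, smul_eq_mul]
  have hgeom := Nat.sum_range_two_pow_sub_add_one n
  have h1 : (n + 1) * 2 ^ n = (n - 1) * 2 ^ n + 2 * 2 ^ n := by
    rw [← add_mul]; congr 1; omega
  rw [pow_succ] at hgeom
  omega

theorem blockMid_mem_Icc {a j : ℕ} (h : (a, j) ∈ rulerPairs n) : blockMid j a ∈ Icc 1 (2 ^ n) := by
  simp only [rulerPairs, mem_filter, mem_product, mem_Icc, mem_range] at h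
  obtain ⟨⟨⟨h1, h2⟩, hj⟩, ha⟩ := h
  have hnear := blockMid_near ha
  rw [mem_Icc]
  refine ⟨Nat.one_le_two_pow.trans (Nat.le_of_dvd (by unfold blockMid; positivity)
    two_pow_dvd_blockMid), ?_⟩
  by_contra! hgt
  have := Nat.eq_of_dvd_of_lt_add_of_lt_add (pow_dvd_pow 2 (Nat.lt_succ_iff.1 hj))
    (two_pow_dvd_blockMid (a := a)) (by omega) (by omega)
  omega

theorem card_rulerEdges : #(rulerEdges n) = #(rulerPairs n) := by
  refine card_image_of_injOn fun p hp q hq he => ?_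
  simp only [rulerPairs, coe_filter, mem_product, mem_Icc, mem_range, Set.mem_ofPred_eq] at hp hq
  simp only [Sym2.eq_iff] at he
  rcases he with ⟨h1, h2⟩ | ⟨h1, h2⟩
  · have := congrArg (padicValNat 2) h2
    rw [padicValNat_blockMid, padicValNat_blockMid] at this
    exact Prod.ext h1 this
  · have hq' : 2 ^ p.2 ∣ q.1 := h2 ▸ two_pow_dvd_blockMid
    have hp' : 2 ^ q.2 ∣ p.1 := h1 ▸ two_pow_dvd_blockMid
    rcases le_total p.2 q.2 with h | h
    · exact absurd ((pow_dvd_pow 2 h).trans hp') hp.2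
    · exact absurd ((pow_dvd_pow 2 h).trans hq') hq.2

theorem mem_Icc_of_mem_rulerEdges {e : Sym2 ℕ} (he : e ∈ rulerEdges n) {x : ℕ} (hx : x ∈ e) :
    x ∈ Icc 1 (2 ^ n) := by
  obtain ⟨⟨a, j⟩, hp, rfl⟩ := mem_image.1 he
  rcases Sym2.mem_iff.1 hx with rfl | rfl
  · exact (mem_product.1 (mem_filter.1 hp).1).1
  · exact blockMid_mem_Icc hp

theorem not_isDiag_of_mem_rulerEdges {e : Sym2 ℕ} (he : e ∈ rulerEdges n) : ¬ e.IsDiag := by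
  obtain ⟨⟨a, j⟩, hp, rfl⟩ := mem_image.1 he
  rw [Sym2.mk_isDiag_iff]
  intro h
  dsimp only at h
  exact (mem_filter.1 hp).2 (by rw [h]; exact two_pow_dvd_blockMid)

theorem mk_mem_rulerEdges {a b : ℕ} (ha : a ∈ Icc 1 (2 ^ n)) (hb : b ∈ Icc 1 (2 ^ n))
    (hval : padicValNat 2 a < padicValNat 2 b) (hab : a < b + 2 ^ padicValNat 2 b)
    (hba : b < a + 2 ^ padicValNat 2 b) : s(a, b) ∈ rulerEdges n := by
  rw [mem_Icc] at ha hb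
  have ha' : ¬ 2 ^ padicValNat 2 b ∣ a := by
    rw [padicValNat_dvd_iff_le (by omega)]
    omega
  refine mem_image.2 ⟨(a, padicValNat 2 b), ?_, ?_⟩
  · simp only [rulerPairs, mem_filter, mem_product, mem_Icc, mem_range]
    exact ⟨⟨ha, Nat.lt_succ_of_le (padicValNat_le_of_le_two_pow hb.2)⟩, ha'⟩
  · rw [blockMid_eq ha' pow_padicValNat_dvd (pow_succ_padicValNat_not_dvd (by omega)) hab hba]

theorem cycleEdges_subset_rulerEdges (hn : 1 ≤ n) : cycleEdges (2 ^ n) ⊆ rulerEdges n := by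
  have hpow : 2 ^ 1 ≤ 2 ^ n := Nat.pow_le_pow_right two_pos hn
  intro e he
  simp only [cycleEdges, mem_insert, mem_image, mem_Ico] at he
  rcases he with rfl | ⟨i, ⟨h1, h2⟩, rfl⟩
  · rw [Sym2.eq_swap]
    refine mk_mem_rulerEdges (by simp; omega) (by simp; omega) ?_ ?_ ?_ <;>
      simp only [padicValNat_one_right, padicValNat.prime_pow] <;> omega
  · have key : ∀ x y, x ∈ Icc 1 (2 ^ n) → y ∈ Icc 1 (2 ^ n) → ¬ 2 ∣ x → 2 ∣ y →
        x < y + 2 → y < x + 2 → s(x, y) ∈ rulerEdges n := by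
      intro x y hx hy hx2 hy2 h1 h2
      have hv := one_le_padicValNat_of_dvd (by rw [mem_Icc] at hy; omega) hy2
      have := Nat.pow_le_pow_right two_pos hv
      refine mk_mem_rulerEdges hx hy ?_ (by omega) (by omega)
      rw [padicValNat.eq_zero_of_not_dvd hx2]
      omega
    have hi : i ∈ Icc 1 (2 ^ n) := by rw [mem_Icc]; omega
    have hi' : i + 1 ∈ Icc 1 (2 ^ n) := by rw [mem_Icc]; omega
    by_cases h : 2 ∣ i
    · rw [Sym2.eq_swap]
      exact key _ _ hi' hi (by omega) h (by omega) (by omega)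
    · exact key _ _ hi hi' h (by omega) (by omega) (by omega)

theorem rulerLabel_of_mem_Icc {x : ℕ} (hx : x ∈ Icc 1 (2 ^ n)) :
    rulerLabel n x = padicValNat 2 x + 1 := by
  rw [rulerLabel, min_eq_left (padicValNat_le_of_le_two_pow (mem_Icc.1 hx).2)]

theorem mem_Icc_of_rulerGraph_adj {x y : ℕ} (h : (rulerGraph n).Adj x y) : x ∈ Icc 1 (2 ^ n) :=
  mem_Icc_of_mem_rulerEdges ((fromEdgeSet_adj _).1 h).1 (Sym2.mem_mk_left x y)

theorem lt_rulerLabel_of_adj_of_lt_of_lt {x y z i : ℕ} (hxy : (rulerGraph n).Adj x y)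
    (hxz : x < z) (hzy : z < y) (hz : 2 ^ i ∣ z) :
    i + 1 < rulerLabel n x ∨ i + 1 < rulerLabel n y := by
  obtain ⟨⟨a, j⟩, hp, hs⟩ := mem_image.1 ((fromEdgeSet_adj _).1 hxy).1
  simp only [rulerPairs, mem_filter, mem_product, mem_range] at hp
  obtain ⟨⟨-, hjn⟩, hja⟩ := hp
  have hlab : rulerLabel n (blockMid j a) = j + 1 := by
    rw [rulerLabel, padicValNat_blockMid, min_eq_left (by omega)]
  have hzj : ¬ 2 ^ j ∣ z := not_two_pow_dvd_of_between hja (by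
    rcases Sym2.eq_iff.1 hs with ⟨h1, h2⟩ | ⟨h1, h2⟩ <;> dsimp only at h1 h2 <;> omega)
  have hij : i < j := by
    by_contra! hji
    exact hzj ((pow_dvd_pow 2 hji).trans hz)
  rcases Sym2.eq_iff.1 hs with ⟨-, hb⟩ | ⟨-, hb⟩ <;> dsimp only at hb
  · exact Or.inr (by rw [← hb, hlab]; omega)
  · exact Or.inl (by rw [← hb, hlab]; omega)

/-- Between two vertices `u < v` of equal label `c + 1` lies the multiple `u + 2 ^ c` of
`2 ^ (c + 1)`, and every edge passing over it ends at a label larger than `c + 2`. -/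
theorem isRanking_rulerLabel : IsRanking (rulerGraph n) (n + 1) (rulerLabel n) := by
  refine isRanking_of_forall_exists_between (fun v => by simp [rulerLabel]) ?_
  rintro u v huv he ⟨x, hux⟩ ⟨y, hvy⟩
  have hu := mem_Icc_of_rulerGraph_adj hux
  have hv := mem_Icc_of_rulerGraph_adj hvy
  rw [rulerLabel_of_mem_Icc hu, rulerLabel_of_mem_Icc hv, Nat.add_right_cancel_iff] at he
  rw [rulerLabel_of_mem_Icc hu]
  rw [mem_Icc] at hu hv
  have hz : 2 ^ (padicValNat 2 u + 1) ∣ u + 2 ^ padicValNat 2 u :=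
    Nat.two_pow_succ_dvd_add_two_pow pow_padicValNat_dvd (pow_succ_padicValNat_not_dvd (by omega))
  have hzv := Nat.add_two_pow_padicValNat_lt (by omega) huv he
  refine ⟨_, Nat.lt_add_of_pos_right (by positivity), hzv, ?_,
    fun x y hxy hxz hzy => (lt_rulerLabel_of_adj_of_lt_of_lt hxy hxz hzy hz).imp
      (fun h => by omega) (fun h => by omega)⟩
  rw [rulerLabel_of_mem_Icc (mem_Icc.2 ⟨by omega, by omega⟩)]
  have := (padicValNat_dvd_iff_le (by omega)).1 hz
  omega

theorem cycleG_sup_fromEdgeSet_rulerEdges_sdiff (hn : 1 ≤ n) :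
    cycleG (2 ^ n) ⊔ fromEdgeSet ↑(rulerEdges n \ cycleEdges (2 ^ n)) = rulerGraph n := by
  have hm : 2 ≤ 2 ^ n := by simpa using Nat.pow_le_pow_right two_pos hn
  rw [← edgeSet_inj, edgeSet_sup, rulerGraph, edgeSet_fromEdgeSet, edgeSet_fromEdgeSet,
    edgeSet_cycleG hm]
  ext e
  have hsub := @cycleEdges_subset_rulerEdges n hn e
  have hdiag := @not_isDiag_of_mem_rulerEdges n e
  simp only [Set.mem_union, mem_coe, Set.mem_sdiff, coe_sdiff, Sym2.mem_diagSet]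
  tauto

theorem cycleG_le_rulerGraph (hn : 1 ≤ n) : cycleG (2 ^ n) ≤ rulerGraph n :=
  le_sup_left.trans_eq (cycleG_sup_fromEdgeSet_rulerEdges_sdiff hn)

theorem rankNumber_rulerGraph (hn : 1 ≤ n) : rankNumber (rulerGraph n) = n + 1 :=
  rankNumber_eq_of_isRanking isRanking_rulerLabel fun _ _ hf =>
    (hf.mono (cycleG_le_rulerGraph hn)).lt_of_cycleG

theorem rankNumber_cycleG (hn : 1 ≤ n) : rankNumber (cycleG (2 ^ n)) = n + 1 :=
  rankNumber_eq_of_isRanking (isRanking_rulerLabel.mono (cycleG_le_rulerGraph hn))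
    fun _ _ hf => hf.lt_of_cycleG

theorem IsRanking.card_filter_le_card_rulerPairs {k : ℕ} {f : ℕ → ℕ}
    (hf : IsRanking (cycleG (2 ^ n)) k f) :
    #{p ∈ Icc 1 (2 ^ n) ×ˢ range (n + 1) | f p.1 ≤ p.2} ≤ #(rulerPairs n) := by
  rw [rulerPairs, card_filter_product, card_filter_product]
  refine sum_le_sum fun j hj => ?_
  dsimp only
  have hj' := Nat.lt_succ_iff.1 (mem_range.1 hj)
  have := hf.card_filter_le_cycleG hj'
  have := card_filter_not_two_pow_dvd hj'
  omega

theorem card_add_le_card_rulerPairs (hn : 2 ≤ n) {S : Finset (Sym2 ℕ)}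
    (hS : ∀ e ∈ S, ¬e.IsDiag ∧ (∀ x ∈ e, x ∈ Set.Icc 1 (2 ^ n)) ∧ e ∉ (cycleG (2 ^ n)).edgeSet)
    (hrank : rankNumber (cycleG (2 ^ n) ⊔ fromEdgeSet ↑S) = rankNumber (cycleG (2 ^ n))) :
    #S + 2 ^ n ≤ #(rulerPairs n) := by
  have hm : 4 ≤ 2 ^ n := by simpa using Nat.pow_le_pow_right two_pos hn
  rw [rankNumber_cycleG (by omega)] at hrank
  obtain ⟨f, hf⟩ := exists_isRanking_rankNumber (by rw [hrank]; omega)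
  rw [hrank] at hf
  have hdisj : Disjoint S (cycleEdges (2 ^ n)) := disjoint_left.2 fun e he hc =>
    (hS e he).2.2 (by rw [edgeSet_cycleG (m := 2 ^ n) (by omega)]; exact hc)
  calc #S + 2 ^ n = #(S ∪ cycleEdges (2 ^ n)) := by
        rw [card_union_of_disjoint hdisj, card_cycleEdges (by omega)]
    _ ≤ #{p ∈ Icc 1 (2 ^ n) ×ˢ range (n + 1) | f p.1 ≤ p.2} := by
        refine hf.card_le_card_filter (fun e he => ?_) (fun e he x hx => ?_)
        · rw [edgeSet_sup, edgeSet_fromEdgeSet, edgeSet_cycleG (m := 2 ^ n) (by omega)]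
          rcases mem_union.1 he with heS | hec
          · exact Or.inr ⟨heS, (hS e heS).1⟩
          · exact Or.inl hec
        · rcases mem_union.1 he with heS | hec
          · simpa using (hS e heS).2.1 x hx
          · exact mem_Icc_of_mem_rulerEdges (cycleEdges_subset_rulerEdges (by omega) hec) hx
    _ ≤ #(rulerPairs n) := (hf.mono le_sup_left).card_filter_le_card_rulerPairs

end Ruler

/-- for every `n > 3`, `μ(C_{2^n}) = (n - 2)·2^n + 1`: the maximum number
of edges that can be added to the cycle `C_{2^n}` without changing its rank number. -/
theorem mu_cycle (n : ℕ) (hn : 3 < n) :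
    muOn (cycleG (2 ^ n)) (Set.Icc 1 (2 ^ n)) = (n - 2) * 2 ^ n + 1 := by
  have hcard := card_rulerPairs (n := n) (by omega)
  have hsplit : (n - 1) * 2 ^ n = (n - 2) * 2 ^ n + 2 ^ n := by
    rw [← add_one_mul]; congr 1; omega
  have hm : 4 ≤ 2 ^ n := by simpa using Nat.pow_le_pow_right two_pos (show 2 ≤ n by omega)
  refine IsGreatest.csSup_eq ⟨⟨rulerEdges n \ cycleEdges (2 ^ n), ?_, fun e he => ?_, ?_⟩, ?_⟩
  · have := card_sdiff_of_subset (cycleEdges_subset_rulerEdges (n := n) (by omega))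
    rw [card_rulerEdges, card_cycleEdges (by omega)] at this
    omega
  · rw [mem_sdiff] at he
    exact ⟨not_isDiag_of_mem_rulerEdges he.1, fun x hx => coe_Icc 1 (2 ^ n) ▸
      mem_Icc_of_mem_rulerEdges he.1 hx, by rw [edgeSet_cycleG (m := 2 ^ n) (by omega)]; exact he.2⟩
  · rw [cycleG_sup_fromEdgeSet_rulerEdges_sdiff (by omega), rankNumber_rulerGraph (by omega),
      rankNumber_cycleG (by omega)]
  · rintro N ⟨S, rfl, hS, hrank⟩
    have := card_add_le_card_rulerPairs (by omega) hS hrank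
    omega
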